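/- If A and B are m×n matrices and B̂ = Σ_{i∈S} σ_i x_i y_i^T is the truncation of the SVD of A to the set S = {i : σ_i > (1+δ)‖A−B‖}, then ‖A − B̂‖ ≤ (1+δ)·‖A − B‖. -/

import Mathlib

noncomputable def singularValues {m n : ℕ} (A : Matrix (Fin m) (Fin n) ℝ) : Fin n → ℝ :=
  fun i => Real.sqrt ((show (Matrix.transpose A * A).IsHermitian by
    simp [Matrix.IsHermitian, Matrix.transpose_mul]).eigenvalues i)

noncomputable def nuclearNorm {m n : ℕ} (A : Matrix (Fin m) (Fin n) ℝ) : ℝ :=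
  ∑ i, singularValues A i

noncomputable def frobeniusNorm {m n : ℕ} (A : Matrix (Fin m) (Fin n) ℝ) : ℝ :=
  Real.sqrt (∑ i, ∑ j, (A i j)^2)

noncomputable def matrixSpectralNorm {m n : ℕ} (A : Matrix (Fin m) (Fin n) ℝ) : ℝ :=
  ⨆ i, singularValues A i

/-!
The residual `A - B̂` is the part of the singular value decomposition of `A` made of the singular
values `σᵢ ≤ t = (1 + δ)‖A - B‖`. For `M = ∑ σᵢ xᵢ yᵢᵀ` with orthonormal `xᵢ`, `yᵢ`, Pythagoras
and Bessel's inequality give `|Mv|² = ∑ σᵢ² ⟨yᵢ, v⟩² ≤ t² |v|²`, and every singular value of `M` is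
`|Mv|` for a unit eigenvector `v` of `MᵀM`, hence at most `t`.
-/

open Matrix

lemma matrixSpectralNorm_nonneg {m n : ℕ} (A : Matrix (Fin m) (Fin n) ℝ) :
    0 ≤ matrixSpectralNorm A :=
  Real.iSup_nonneg fun _ => Real.sqrt_nonneg _

lemma matrixSpectralNorm_le_of_forall_dotProduct_mulVec_le {m n : ℕ}
    (M : Matrix (Fin m) (Fin n) ℝ) {c : ℝ} (hc : 0 ≤ c)
    (h : ∀ v, (M *ᵥ v) ⬝ᵥ (M *ᵥ v) ≤ c ^ 2 * (v ⬝ᵥ v)) :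
    matrixSpectralNorm M ≤ c := by
  have hM : (Mᵀ * M).IsHermitian := by simpa using isHermitian_conjTranspose_mul_self M
  refine Real.iSup_le (fun i => ?_) hc
  set v : Fin n → ℝ := hM.eigenvectorBasis i |>.ofLp
  have hv : v ⬝ᵥ v = 1 := by
    have := real_inner_self_eq_norm_sq (hM.eigenvectorBasis i)
    rw [hM.eigenvectorBasis.orthonormal.1 i, EuclideanSpace.inner_eq_star_dotProduct] at this
    simpa using this
  have heigenvalue : hM.eigenvalues i = (M *ᵥ v) ⬝ᵥ (M *ᵥ v) := by
    rw [dotProduct_mulVec, ← vecMul_transpose, vecMul_vecMul, ← dotProduct_mulVec,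
      hM.mulVec_eigenvectorBasis i, dotProduct_smul, hv, smul_eq_mul, mul_one]
  calc Real.sqrt (hM.eigenvalues i) ≤ Real.sqrt (c ^ 2) := by
        gcongr
        simpa [heigenvalue, hv] using h v
    _ = c := Real.sqrt_sq hc

section Orthonormal

variable {ι κ : Type*} [Fintype κ] [DecidableEq ι] {v : ι → κ → ℝ}

lemma orthonormal_toLp_of_dotProduct_eq_ite (hv : ∀ i j, v i ⬝ᵥ v j = if i = j then 1 else 0) :
    Orthonormal ℝ fun i => (WithLp.toLp 2 (v i) : EuclideanSpace ℝ κ) := by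
  rw [orthonormal_iff_ite]
  intro i j
  rw [EuclideanSpace.inner_toLp_toLp, star_trivial, hv j i]
  simp only [eq_comm]

lemma sum_sq_dotProduct_le_of_dotProduct_eq_ite
    (hv : ∀ i j, v i ⬝ᵥ v j = if i = j then 1 else 0) (s : Finset ι) (w : κ → ℝ) :
    ∑ i ∈ s, (v i ⬝ᵥ w) ^ 2 ≤ w ⬝ᵥ w := by
  have hbessel :=
    (orthonormal_toLp_of_dotProduct_eq_ite hv).sum_inner_products_le (WithLp.toLp 2 w) (s := s)
  have hw : ‖(WithLp.toLp 2 w : EuclideanSpace ℝ κ)‖ ^ 2 = w ⬝ᵥ w := by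
    rw [← real_inner_self_eq_norm_sq, EuclideanSpace.inner_toLp_toLp, star_trivial]
  simpa [hw, EuclideanSpace.inner_toLp_toLp, dotProduct_comm] using hbessel

lemma dotProduct_self_sum_smul_of_dotProduct_eq_ite
    (hv : ∀ i j, v i ⬝ᵥ v j = if i = j then 1 else 0) (s : Finset ι) (c : ι → ℝ) :
    (∑ i ∈ s, c i • v i) ⬝ᵥ (∑ i ∈ s, c i • v i) = ∑ i ∈ s, c i ^ 2 := by
  simp [sum_dotProduct, dotProduct_sum, hv, sq]

end Orthonormal

lemma matrixSpectralNorm_sum_smul_vecMulVec_le {m n : ℕ} {ι : Type*} [DecidableEq ι]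
    {x : ι → Fin m → ℝ} {y : ι → Fin n → ℝ}
    (hx : ∀ i j, x i ⬝ᵥ x j = if i = j then 1 else 0)
    (hy : ∀ i j, y i ⬝ᵥ y j = if i = j then 1 else 0)
    (s : Finset ι) (σ : ι → ℝ) {t : ℝ} (ht : 0 ≤ t) (hσ : ∀ i ∈ s, |σ i| ≤ t) :
    matrixSpectralNorm (∑ i ∈ s, σ i • vecMulVec (x i) (y i)) ≤ t := by
  refine matrixSpectralNorm_le_of_forall_dotProduct_mulVec_le _ ht fun w => ?_
  have hmulVec : (∑ i ∈ s, σ i • vecMulVec (x i) (y i)) *ᵥ w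
      = ∑ i ∈ s, (σ i * (y i ⬝ᵥ w)) • x i := by
    simp [sum_mulVec, smul_mulVec, vecMulVec_mulVec, smul_smul]
  calc _ = ∑ i ∈ s, σ i ^ 2 * (y i ⬝ᵥ w) ^ 2 := by
        simp only [hmulVec, dotProduct_self_sum_smul_of_dotProduct_eq_ite hx, mul_pow]
    _ ≤ ∑ i ∈ s, t ^ 2 * (y i ⬝ᵥ w) ^ 2 := by
        refine Finset.sum_le_sum fun i hi => ?_
        obtain ⟨hlower, hupper⟩ := abs_le.mp (hσ i hi)
        exact mul_le_mul_of_nonneg_right (sq_le_sq' hlower hupper) (sq_nonneg _)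
    _ ≤ t ^ 2 * (w ⬝ᵥ w) := by
        rw [← Finset.mul_sum]
        gcongr
        exact sum_sq_dotProduct_le_of_dotProduct_eq_ite hy s w

open Matrix in
open scoped Classical in
theorem spectralNorm_sub_svt_le {m n : ℕ} (A B : Matrix (Fin m) (Fin n) ℝ) (δ : ℝ) (hδ : 0 < δ)
    (σ : Fin m → ℝ) (x : Fin m → Fin m → ℝ) (y : Fin m → Fin n → ℝ)
    (hσ : ∀ i, 0 ≤ σ i)
    (hx : ∀ i j, x i ⬝ᵥ x j = if i = j then (1:ℝ) else 0)
    (hy : ∀ i j, y i ⬝ᵥ y j = if i = j then (1:ℝ) else 0)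
    (hA : A = ∑ i, σ i • Matrix.vecMulVec (x i) (y i)) :
    matrixSpectralNorm
      (A - ∑ i ∈ (Finset.univ.filter fun i => (1 + δ) * matrixSpectralNorm (A - B) < σ i),
        σ i • Matrix.vecMulVec (x i) (y i))
      ≤ (1 + δ) * matrixSpectralNorm (A - B) := by
  set t := (1 + δ) * matrixSpectralNorm (A - B)
  set S := Finset.univ.filter fun i => t < σ i
  have ht : 0 ≤ t := mul_nonneg (by linarith) (matrixSpectralNorm_nonneg _)
  have hresidual : A - ∑ i ∈ S, σ i • vecMulVec (x i) (y i)
      = ∑ i ∈ Sᶜ, σ i • vecMulVec (x i) (y i) := by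
    rw [hA, ← Finset.sum_compl_add_sum S, add_sub_cancel_right]
  rw [hresidual]
  refine matrixSpectralNorm_sum_smul_vecMulVec_le hx hy Sᶜ σ ht fun i hi => ?_
  rw [abs_of_nonneg (hσ i)]
  simpa [S] using hi
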